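/- Main theorem, (c) ⇒ (a): Let C be a symmetric monoidal category with braiding σ, and suppose the identity functor of C admits a unital magma structure (μ, η) such that for all objects A, B: tensorμ(A, A, B, B) ≫ μ_{A⊗B} = μ_A ⊗ μ_B. Then C is cocartesian: 𝟙_C is an initial object, and for all A, B the cospan A —ι₁→ A ⊗ B ←ι₂— B, with ι₁ := (ρ_A).inv ≫ (A ◁ η_B) and ι₂ := (λ_B).inv ≫ (η_A ▷ B), is a binary coproduct of A and B. -/

import Mathlib

open CategoryTheory CategoryTheory.Limits CategoryTheory.MonoidalCategory

/-- A unital magma structure on the identity functor of a monoidal category: natural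
families `μ_A : A ⊗ A ⟶ A` and `η_A : 𝟙_C ⟶ A` satisfying the two unit laws. -/
structure IdMagma (C : Type*) [Category C] [MonoidalCategory C] where
  μ : ∀ A : C, A ⊗ A ⟶ A
  η : ∀ A : C, 𝟙_ C ⟶ A
  μ_natural : ∀ {A B : C} (f : A ⟶ B), (f ⊗ₘ f) ≫ μ B = μ A ≫ f
  η_natural : ∀ {A B : C} (f : A ⟶ B), η A ≫ f = η B
  left_unit : ∀ A : C, (λ_ A).inv ≫ (η A ▷ A) ≫ μ A = 𝟙 A
  right_unit : ∀ A : C, (ρ_ A).inv ≫ (A ◁ η A) ≫ μ A = 𝟙 A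

/-!
The copairing of `f : A ⟶ Z` and `g : B ⟶ Z` is `(f ⊗ g) ≫ μ_Z`; the unit laws and naturality of `η` make
it restrict to `f` and `g`. For uniqueness, naturality of `μ` reduces everything to the single identity
`(ι₁ ⊗ ι₂) ≫ μ_{A ⊗ B} = 𝟙`, which is where the compatibility of `μ` with `tensorμ` enters:
after moving the units past `tensorμ` it becomes the tensor product of the two unit laws.
The unit is initial because `η_𝟙 = 𝟙` (apply naturality of `η` to `ρ⁻¹ ≫ μ_𝟙`), so every
`f : 𝟙 ⟶ X` equals `η_𝟙 ≫ f = η_X`.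
-/

lemma tensorμ_tensorUnit {C : Type*} [Category C] [MonoidalCategory C] [BraidedCategory C]
    (A B : C) : tensorμ A (𝟙_ C) (𝟙_ C) B = 𝟙 _ := by
  rw [tensorμ, braiding_tensorUnit_left]
  monoidal

namespace IdMagma

variable {C : Type*} [Category C] [MonoidalCategory C] (m : IdMagma C)

lemma η_tensorUnit : m.η (𝟙_ C) = 𝟙 (𝟙_ C) := by
  have h : m.η (𝟙_ C) ≫ (ρ_ (𝟙_ C)).inv ≫ m.μ (𝟙_ C) = 𝟙 (𝟙_ C) := by
    simpa [unitors_inv_equal] using m.left_unit (𝟙_ C)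
  rw [← m.η_natural ((ρ_ (𝟙_ C)).inv ≫ m.μ (𝟙_ C)), h]

lemma eq_η {X : C} (f : 𝟙_ C ⟶ X) : f = m.η X := by
  simpa [η_tensorUnit] using m.η_natural f

def isInitialTensorUnit : IsInitial (𝟙_ C) :=
  IsInitial.ofUniqueHom m.η fun _ f => m.eq_η f

def inl (A B : C) : A ⟶ A ⊗ B := (ρ_ A).inv ≫ (A ◁ m.η B)

def inr (A B : C) : B ⟶ A ⊗ B := (λ_ B).inv ≫ (m.η A ▷ B)

lemma inl_tensorHom_comp_μ {A B Z : C} (f : A ⟶ Z) (g : B ⟶ Z) :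
    m.inl A B ≫ (f ⊗ₘ g) ≫ m.μ Z = f := by
  rw [inl, ← id_tensorHom, Category.assoc, tensorHom_comp_tensorHom_assoc, Category.id_comp,
    m.η_natural, MonoidalCategory.tensorHom_def, Category.assoc, ← rightUnitor_inv_naturality_assoc,
    m.right_unit, Category.comp_id]

lemma inr_tensorHom_comp_μ {A B Z : C} (f : A ⟶ Z) (g : B ⟶ Z) :
    m.inr A B ≫ (f ⊗ₘ g) ≫ m.μ Z = g := by
  rw [inr, ← tensorHom_id, Category.assoc, tensorHom_comp_tensorHom_assoc, Category.id_comp,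
    m.η_natural, MonoidalCategory.tensorHom_def', Category.assoc, ← leftUnitor_inv_naturality_assoc,
    m.left_unit, Category.comp_id]

lemma eq_tensorHom_comp_μ {A B Z : C} (d : A ⊗ B ⟶ Z)
    (hd : (m.inl A B ⊗ₘ m.inr A B) ≫ m.μ (A ⊗ B) = 𝟙 (A ⊗ B)) :
    d = (m.inl A B ≫ d ⊗ₘ m.inr A B ≫ d) ≫ m.μ Z := by
  rw [← tensorHom_comp_tensorHom, Category.assoc, m.μ_natural, ← Category.assoc, hd,
    Category.id_comp]

lemma inl_tensorHom_inr_comp_μ [BraidedCategory C]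
    (h : ∀ A B : C, tensorμ A A B B ≫ m.μ (A ⊗ B) = m.μ A ⊗ₘ m.μ B) (A B : C) :
    (m.inl A B ⊗ₘ m.inr A B) ≫ m.μ (A ⊗ B) = 𝟙 (A ⊗ B) := by
  have hμ := tensorμ_natural (𝟙 A) (m.η A) (m.η B) (𝟙 B)
  rw [tensorμ_tensorUnit, Category.id_comp] at hμ
  calc (m.inl A B ⊗ₘ m.inr A B) ≫ m.μ (A ⊗ B)
      = ((ρ_ A).inv ⊗ₘ (λ_ B).inv) ≫ ((𝟙 A ⊗ₘ m.η B) ⊗ₘ (m.η A ⊗ₘ 𝟙 B)) ≫ m.μ (A ⊗ B) := by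
        rw [inl, inr, ← tensorHom_comp_tensorHom, id_tensorHom, tensorHom_id, Category.assoc]
    _ = ((ρ_ A).inv ⊗ₘ (λ_ B).inv) ≫ ((𝟙 A ⊗ₘ m.η A) ⊗ₘ (m.η B ⊗ₘ 𝟙 B)) ≫
          tensorμ A A B B ≫ m.μ (A ⊗ B) := by
        rw [← hμ, Category.assoc]
    _ = ((ρ_ A).inv ≫ (A ◁ m.η A) ≫ m.μ A) ⊗ₘ ((λ_ B).inv ≫ (m.η B ▷ B) ≫ m.μ B) := by
        rw [h, tensorHom_comp_tensorHom, tensorHom_comp_tensorHom, id_tensorHom, tensorHom_id]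
    _ = 𝟙 (A ⊗ B) := by
        rw [m.right_unit, m.left_unit, id_tensorHom_id]

def isColimitBinaryCofan [BraidedCategory C]
    (h : ∀ A B : C, tensorμ A A B B ≫ m.μ (A ⊗ B) = m.μ A ⊗ₘ m.μ B) (A B : C) :
    IsColimit (BinaryCofan.mk (m.inl A B) (m.inr A B)) :=
  BinaryCofan.IsColimit.mk _ (fun f g => (f ⊗ₘ g) ≫ m.μ _) m.inl_tensorHom_comp_μ
    m.inr_tensorHom_comp_μ fun _ _ d hl hr =>
      (m.eq_tensorHom_comp_μ d (m.inl_tensorHom_inr_comp_μ h A B)).trans (hl ▸ hr ▸ rfl)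

end IdMagma

/-- Main theorem, (c) ⇒ (a): a symmetric monoidal category whose identity functor admits
a unital magma structure compatible with the braiding
(`tensorμ A A B B ≫ μ_{A⊗B} = μ_A ⊗ μ_B`) is cocartesian: the unit is initial and the
canonical cospans are binary coproducts. -/
theorem cocartesian_of_symmetry_condition {C : Type*} [Category C] [MonoidalCategory C]
    [SymmetricCategory C] (m : IdMagma C)
    (h : ∀ A B : C, tensorμ A A B B ≫ m.μ (A ⊗ B) = m.μ A ⊗ₘ m.μ B) :
    Nonempty (IsInitial (𝟙_ C)) ∧
    (∀ A B : C, Nonempty (IsColimit (BinaryCofan.mk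
        ((ρ_ A).inv ≫ (A ◁ m.η B)) ((λ_ B).inv ≫ (m.η A ▷ B))))) :=
  ⟨⟨m.isInitialTensorUnit⟩, fun A B => ⟨m.isColimitBinaryCofan h A B⟩⟩
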